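/- Let H_U ∈ ℝ^{n_U×n_U}, H_V ∈ ℝ^{n_V×n_V}, H_U^Γ ∈ ℝ^{m_U×m_U}, H_V^Γ ∈ ℝ^{m_V×m_V} be symmetric positive definite. Let e_E, d_E ∈ ℝ^{n_U×m_U} and e_W, d_W ∈ ℝ^{n_V×m_V}, and suppose there exist symmetric positive semidefinite M_U ∈ ℝ^{n_U×n_U} and M_V ∈ ℝ^{n_V×n_V} with H_U D_Δ^U = e_E H_U^Γ d_Eᵀ − M_U and H_V D_Δ^V = e_W H_V^Γ d_Wᵀ − M_V. Let the interpolation matrices I_{v2u}^g, I_{v2u}^b ∈ ℝ^{m_U×m_V} and I_{u2v}^g, I_{u2v}^b ∈ ℝ^{m_V×m_U} satisfy H_U^Γ I_{v2u}^b = (I_{u2v}^g)ᵀ H_V^Γ and (I_{v2u}^g)ᵀ H_U^Γ = H_V^Γ I_{u2v}^b. Let a, b ∈ ℂ with Re a ≥ 0 and Re b ≥ 0, and let u: ℝ → ℂ^{n_U}, v: ℝ → ℂ^{n_V} be differentiable and satisfy the semi-discrete scheme u' = a D_Δ^U u − (1/2) ā H_U^{-1} d_E H_U^Γ (e_Eᵀu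 − I_{v2u}^g e_Wᵀv) − (1/2) H_U^{-1} e_E H_U^Γ (a d_Eᵀu + b I_{v2u}^b d_Wᵀv) and v' = b D_Δ^V v − (1/2) b̄ H_V^{-1} d_W H_V^Γ (e_Wᵀv − I_{u2v}^g e_Eᵀu) − (1/2) H_V^{-1} e_W H_V^Γ (b d_Wᵀv + a I_{u2v}^b d_Eᵀu). Then d/dt (u* H_U u + v* H_V v) = −(a+ā) u* M_U u − (b+b̄) v* M_V v ≤ 0 for all t. -/

import Mathlib

/-!
Differentiating the energy gives `2 Re (u* H_U u') + 2 Re (v* H_V v')`. In `u* H_U u'` the factor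
`H_U` cancels `H_U⁻¹`, and the SBP identity turns `a u* H_U D_Δ^U u` into
`a (e_Eᵀu)* H_U^Γ (d_Eᵀu) − a u* M_U u`. Together with the penalty terms the interface term
`(e_Eᵀu)* H_U^Γ (d_Eᵀu)` appears as `(a z − conj (a z)) / 2`, which has no real part. The coupling
terms that remain are, by the adjoint relations of the interpolation operators, complex
conjugates of the coupling terms of the other block with the opposite sign, so they cancel in the
real part as well, leaving `−(a + ā) u* M_U u − (b + b̄) v* M_V v`.
-/

open Matrix ComplexOrder ComplexConjugate

/-- Complexification of a real matrix. -/
def cm {m n : Type*} (A : Matrix m n ℝ) : Matrix m n ℂ := A.map (fun r => (r : ℂ))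

section Derivatives

variable {𝕜 𝔸 ι κ : Type*} [NontriviallyNormedField 𝕜] [NormedCommRing 𝔸] [NormedAlgebra 𝕜 𝔸]
  [Fintype ι] {f g : 𝕜 → ι → 𝔸} {f' g' : ι → 𝔸} {t : 𝕜}

theorem HasDerivAt.dotProduct (hf : HasDerivAt f f' t) (hg : HasDerivAt g g' t) :
    HasDerivAt (fun s => f s ⬝ᵥ g s) (f' ⬝ᵥ g t + f t ⬝ᵥ g') t := by
  have h := HasDerivAt.fun_sum (u := Finset.univ) fun i _ =>
    (hasDerivAt_pi.1 hf i).mul (hasDerivAt_pi.1 hg i)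
  rw [Finset.sum_add_distrib] at h
  exact h

theorem HasDerivAt.mulVec (A : Matrix κ ι 𝔸) (hf : HasDerivAt f f' t) :
    HasDerivAt (fun s => A *ᵥ f s) (A *ᵥ f') t :=
  hasDerivAt_pi.2 fun k =>
    HasDerivAt.fun_sum (u := Finset.univ) fun i _ => (hasDerivAt_pi.1 hf i).const_mul (A k i)

end Derivatives

theorem star_star_dotProduct_mulVec {R m n : Type*} [CommSemiring R] [StarRing R] [Fintype m]
    [Fintype n] (A : Matrix m n R) (x : m → R) (y : n → R) :
    star (star x ⬝ᵥ A *ᵥ y) = star y ⬝ᵥ Aᴴ *ᵥ x := by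
  rw [star_dotProduct, star_star, star_mulVec, dotProduct_mulVec]

theorem Matrix.IsHermitian.conj_star_dotProduct_mulVec {m : Type*} [Fintype m] {A : Matrix m m ℂ}
    (hA : A.IsHermitian) (x y : m → ℂ) : conj (star x ⬝ᵥ A *ᵥ y) = star y ⬝ᵥ A *ᵥ x := by
  rw [starRingEnd_apply, star_star_dotProduct_mulVec, hA.eq]

theorem HasDerivAt.star_dotProduct_mulVec_self {n : Type*} [Fintype n] {A : Matrix n n ℂ}
    (hA : A.IsHermitian) {u : ℝ → n → ℂ} {u' : n → ℂ} {t : ℝ} (hu : HasDerivAt u u' t) :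
    HasDerivAt (fun s => star (u s) ⬝ᵥ A *ᵥ u s)
      (star (u t) ⬝ᵥ A *ᵥ u' + conj (star (u t) ⬝ᵥ A *ᵥ u')) t := by
  rw [hA.conj_star_dotProduct_mulVec, add_comm]
  exact hu.star.dotProduct (hu.mulVec A)

section Complexification

variable {l m n : Type*}

theorem cm_mul [Fintype m] (A : Matrix l m ℝ) (B : Matrix m n ℝ) : cm (A * B) = cm A * cm B :=
  Matrix.map_mul (f := Complex.ofRealHom)

theorem cm_sub (A B : Matrix m n ℝ) : cm (A - B) = cm A - cm B :=
  Matrix.map_sub _ Complex.ofReal_sub A B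

theorem cm_transpose (A : Matrix m n ℝ) : cm Aᵀ = (cm A)ᵀ := rfl

theorem conjTranspose_cm (A : Matrix m n ℝ) : (cm A)ᴴ = cm Aᵀ := by
  ext i j; simp [cm]

theorem isHermitian_cm {A : Matrix n n ℝ} (hA : A.IsHermitian) : (cm A).IsHermitian :=
  hA.map _ fun r => (Complex.conj_ofReal r).symm

theorem cm_mulVec_inv_mulVec [Fintype n] [DecidableEq n] {A : Matrix n n ℝ} (hA : IsUnit A)
    (w : n → ℂ) : cm A *ᵥ ((cm A)⁻¹ *ᵥ w) = w := by
  have hdet : IsUnit (cm A).det :=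
    (isUnit_iff_isUnit_det _).1 (hA.map (Complex.ofRealHom.mapMatrix))
  rw [mulVec_mulVec, mul_nonsing_inv _ hdet, one_mulVec]

open scoped MatrixOrder in
theorem posSemidef_cm [Fintype n] [DecidableEq n] {A : Matrix n n ℝ} (hA : A.PosSemidef) :
    (cm A).PosSemidef := by
  have hsqrt : (CFC.sqrt A)ᵀ = CFC.sqrt A :=
    (isHermitian_iff_isSymm.1 (CFC.sqrt_nonneg A).posSemidef.isHermitian).eq
  have h := posSemidef_conjTranspose_mul_self (cm (CFC.sqrt A))
  rwa [conjTranspose_cm, hsqrt, ← cm_mul, CFC.sqrt_mul_sqrt_self A hA.nonneg] at h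

theorem star_dotProduct_cm_mulVec [Fintype m] [Fintype n] (A : Matrix m n ℝ) (x : m → ℂ)
    (z : n → ℂ) : star x ⬝ᵥ cm A *ᵥ z = star ((cm A)ᵀ *ᵥ x) ⬝ᵥ z := by
  rw [← cm_transpose, star_mulVec, conjTranspose_cm, transpose_transpose, dotProduct_mulVec]

theorem conj_star_dotProduct_cm_mulVec_cm_mulVec [Fintype m] [Fintype n] {K : Matrix m m ℝ}
    {S : Matrix m n ℝ} {P : Matrix n m ℝ} {G : Matrix n n ℝ} (hK : K.IsHermitian)
    (hSKGP : Sᵀ * K = G * P) (x : n → ℂ) (y : m → ℂ) :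
    conj (star y ⬝ᵥ cm K *ᵥ (cm S *ᵥ x)) = star x ⬝ᵥ cm G *ᵥ (cm P *ᵥ y) := by
  rw [mulVec_mulVec, ← cm_mul, starRingEnd_apply, star_star_dotProduct_mulVec, conjTranspose_cm,
    transpose_mul, (isHermitian_iff_isSymm.1 hK).eq, hSKGP, cm_mul, mulVec_mulVec]

theorem add_conj_mul_star_dotProduct_cm_mulVec_nonneg [Fintype n] [DecidableEq n] {a : ℂ}
    (ha : 0 ≤ a.re) {M : Matrix n n ℝ} (hM : M.PosSemidef) (x : n → ℂ) :
    0 ≤ (a + conj a) * (star x ⬝ᵥ cm M *ᵥ x) := by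
  refine mul_nonneg ?_ ((posSemidef_cm hM).dotProduct_mulVec_nonneg x)
  rw [Complex.add_conj]
  exact_mod_cast by linarith

end Complexification

section SbpSat

variable {n m : Type*} [Fintype n] [DecidableEq n] [Fintype m]

/-- The SAT-penalized right-hand side on one block: `p` and `q` stand for the neighbouring block's
interpolated trace `I^g eᵀ v` and normal derivative `I^b dᵀ v`, and `b` for its coefficient. -/
noncomputable def satRhs (H D : Matrix n n ℝ) (e d : Matrix n m ℝ) (G : Matrix m m ℝ) (a b : ℂ)
    (x : n → ℂ) (p q : m → ℂ) : n → ℂ :=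
  a • (cm D *ᵥ x)
    - ((1 : ℂ) / 2) • (conj a • ((cm H)⁻¹ *ᵥ (cm d *ᵥ (cm G *ᵥ ((cm e)ᵀ *ᵥ x - p)))))
    - ((1 : ℂ) / 2) • ((cm H)⁻¹ *ᵥ (cm e *ᵥ (cm G *ᵥ (a • ((cm d)ᵀ *ᵥ x) + b • q))))

variable {H D M : Matrix n n ℝ} {e d : Matrix n m ℝ} {G : Matrix m m ℝ}

theorem star_dotProduct_satRhs (hH : IsUnit H) (hSBP : H * D = e * G * dᵀ - M) (a b : ℂ)
    (x : n → ℂ) (p q : m → ℂ) :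
    star x ⬝ᵥ cm H *ᵥ satRhs H D e d G a b x p q =
      a / 2 * (star ((cm e)ᵀ *ᵥ x) ⬝ᵥ cm G *ᵥ ((cm d)ᵀ *ᵥ x))
        - conj a / 2 * (star ((cm d)ᵀ *ᵥ x) ⬝ᵥ cm G *ᵥ ((cm e)ᵀ *ᵥ x))
        - a * (star x ⬝ᵥ cm M *ᵥ x)
        + (conj a * (star ((cm d)ᵀ *ᵥ x) ⬝ᵥ cm G *ᵥ p)
          - b * (star ((cm e)ᵀ *ᵥ x) ⬝ᵥ cm G *ᵥ q)) / 2 := by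
  have hHD : cm H *ᵥ (cm D *ᵥ x) = cm e *ᵥ (cm G *ᵥ ((cm d)ᵀ *ᵥ x)) - cm M *ᵥ x := by
    rw [mulVec_mulVec, ← cm_mul, hSBP, cm_sub, sub_mulVec, cm_mul, cm_mul, cm_transpose,
      mulVec_mulVec, mulVec_mulVec, Matrix.mul_assoc]
  simp only [satRhs, mulVec_sub, mulVec_add, mulVec_smul, cm_mulVec_inv_mulVec hH, hHD,
    dotProduct_sub, dotProduct_add, dotProduct_smul, smul_eq_mul, star_dotProduct_cm_mulVec e x,
    star_dotProduct_cm_mulVec d x]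
  ring

theorem star_dotProduct_satRhs_add_conj (hH : IsUnit H) (hG : G.IsHermitian) (hM : M.IsHermitian)
    (hSBP : H * D = e * G * dᵀ - M) (a b : ℂ) (x : n → ℂ) (p q : m → ℂ) :
    star x ⬝ᵥ cm H *ᵥ satRhs H D e d G a b x p q
        + conj (star x ⬝ᵥ cm H *ᵥ satRhs H D e d G a b x p q) =
      -((a + conj a) * (star x ⬝ᵥ cm M *ᵥ x))
        + (conj a * (star ((cm d)ᵀ *ᵥ x) ⬝ᵥ cm G *ᵥ p)
            + a * conj (star ((cm d)ᵀ *ᵥ x) ⬝ᵥ cm G *ᵥ p)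
          - b * (star ((cm e)ᵀ *ᵥ x) ⬝ᵥ cm G *ᵥ q)
          - conj b * conj (star ((cm e)ᵀ *ᵥ x) ⬝ᵥ cm G *ᵥ q)) / 2 := by
  have hGc : (cm G).IsHermitian := isHermitian_cm hG
  have hMc : (cm M).IsHermitian := isHermitian_cm hM
  rw [star_dotProduct_satRhs hH hSBP]
  simp only [map_add, map_sub, map_mul, map_div₀, map_ofNat, Complex.conj_conj,
    hGc.conj_star_dotProduct_mulVec, hMc.conj_star_dotProduct_mulVec]
  ring

end SbpSat

/-- Energy stability of the SBP-SAT semi-discretization of `u_t = aΔu`, `v_t = bΔv`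
coupled at a non-conforming interface with order preserving interpolation operators and
penalty parameters `τ_u = σ_u = τ_v = σ_v = −1/2`: the discrete energy
`u* H_U u + v* H_V v` satisfies
`d/dt (u* H_U u + v* H_V v) = −(a+ā) u* M_U u − (b+b̄) v* M_V v ≤ 0`. -/
theorem stmt7 {nU nV mU mV : ℕ}
    (HU : Matrix (Fin nU) (Fin nU) ℝ) (HV : Matrix (Fin nV) (Fin nV) ℝ)
    (HUΓ : Matrix (Fin mU) (Fin mU) ℝ) (HVΓ : Matrix (Fin mV) (Fin mV) ℝ)
    (hHU : HU.PosDef) (hHV : HV.PosDef) (hHUΓ : HUΓ.PosDef) (hHVΓ : HVΓ.PosDef)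
    (eE dE : Matrix (Fin nU) (Fin mU) ℝ) (eW dW : Matrix (Fin nV) (Fin mV) ℝ)
    (DΔU : Matrix (Fin nU) (Fin nU) ℝ) (DΔV : Matrix (Fin nV) (Fin nV) ℝ)
    (MU : Matrix (Fin nU) (Fin nU) ℝ) (MV : Matrix (Fin nV) (Fin nV) ℝ)
    (hMU : MU.PosSemidef) (hMV : MV.PosSemidef)
    (hSBPU : HU * DΔU = eE * HUΓ * dEᵀ - MU)
    (hSBPV : HV * DΔV = eW * HVΓ * dWᵀ - MV)
    (Ivug Ivub : Matrix (Fin mU) (Fin mV) ℝ) (Iuvg Iuvb : Matrix (Fin mV) (Fin mU) ℝ)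
    (hadj1 : HUΓ * Ivub = Iuvgᵀ * HVΓ)
    (hadj2 : Ivugᵀ * HUΓ = HVΓ * Iuvb)
    (a b : ℂ) (ha : 0 ≤ a.re) (hb : 0 ≤ b.re)
    (u : ℝ → Fin nU → ℂ) (v : ℝ → Fin nV → ℂ)
    (hu : ∀ t : ℝ, HasDerivAt u
      (a • ((cm DΔU) *ᵥ u t)
        - ((1 : ℂ) / 2) • (conj a •
            ((cm HU)⁻¹ *ᵥ ((cm dE) *ᵥ ((cm HUΓ) *ᵥ
              ((cm eE)ᵀ *ᵥ u t - (cm Ivug) *ᵥ ((cm eW)ᵀ *ᵥ v t))))))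
        - ((1 : ℂ) / 2) •
            ((cm HU)⁻¹ *ᵥ ((cm eE) *ᵥ ((cm HUΓ) *ᵥ
              (a • ((cm dE)ᵀ *ᵥ u t) + b • ((cm Ivub) *ᵥ ((cm dW)ᵀ *ᵥ v t))))))) t)
    (hv : ∀ t : ℝ, HasDerivAt v
      (b • ((cm DΔV) *ᵥ v t)
        - ((1 : ℂ) / 2) • (conj b •
            ((cm HV)⁻¹ *ᵥ ((cm dW) *ᵥ ((cm HVΓ) *ᵥ
              ((cm eW)ᵀ *ᵥ v t - (cm Iuvg) *ᵥ ((cm eE)ᵀ *ᵥ u t))))))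
        - ((1 : ℂ) / 2) •
            ((cm HV)⁻¹ *ᵥ ((cm eW) *ᵥ ((cm HVΓ) *ᵥ
              (b • ((cm dW)ᵀ *ᵥ v t) + a • ((cm Iuvb) *ᵥ ((cm dE)ᵀ *ᵥ u t))))))) t) :
    ∀ t : ℝ,
      HasDerivAt (fun s => star (u s) ⬝ᵥ (cm HU) *ᵥ u s + star (v s) ⬝ᵥ (cm HV) *ᵥ v s)
        (-((a + conj a) * (star (u t) ⬝ᵥ (cm MU) *ᵥ u t))
          - (b + conj b) * (star (v t) ⬝ᵥ (cm MV) *ᵥ v t)) t ∧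
      -((a + conj a) * (star (u t) ⬝ᵥ (cm MU) *ᵥ u t))
          - (b + conj b) * (star (v t) ⬝ᵥ (cm MV) *ᵥ v t) ≤ 0 := by
  intro t
  have hu' : HasDerivAt u (satRhs HU DΔU eE dE HUΓ a b (u t)
      (cm Ivug *ᵥ ((cm eW)ᵀ *ᵥ v t)) (cm Ivub *ᵥ ((cm dW)ᵀ *ᵥ v t))) t := hu t
  have hv' : HasDerivAt v (satRhs HV DΔV eW dW HVΓ b a (v t)
      (cm Iuvg *ᵥ ((cm eE)ᵀ *ᵥ u t)) (cm Iuvb *ᵥ ((cm dE)ᵀ *ᵥ u t))) t := hv t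
  have hadj2' : Iuvbᵀ * HVΓ = HUΓ * Ivug := by
    simpa only [transpose_mul, transpose_transpose, (isHermitian_iff_isSymm.1 hHUΓ.1).eq,
      (isHermitian_iff_isSymm.1 hHVΓ.1).eq] using (congrArg transpose hadj2).symm
  have hcross₁ := conj_star_dotProduct_cm_mulVec_cm_mulVec hHVΓ.1 hadj2' ((cm dE)ᵀ *ᵥ u t)
    ((cm eW)ᵀ *ᵥ v t)
  have hcross₂ := conj_star_dotProduct_cm_mulVec_cm_mulVec hHVΓ.1 hadj1.symm ((cm eE)ᵀ *ᵥ u t)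
    ((cm dW)ᵀ *ᵥ v t)
  have hcross₁' := congrArg conj hcross₁
  have hcross₂' := congrArg conj hcross₂
  rw [Complex.conj_conj] at hcross₁' hcross₂'
  refine ⟨((hu'.star_dotProduct_mulVec_self (isHermitian_cm hHU.1)).add
      (hv'.star_dotProduct_mulVec_self (isHermitian_cm hHV.1))).congr_deriv ?_, ?_⟩
  · rw [star_dotProduct_satRhs_add_conj hHU.isUnit hHUΓ.1 hMU.1 hSBPU,
      star_dotProduct_satRhs_add_conj hHV.isUnit hHVΓ.1 hMV.1 hSBPV]
    linear_combination -(a / 2) * hcross₁' - (conj a / 2) * hcross₁ + (b / 2) * hcross₂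
      + (conj b / 2) * hcross₂'
  · have hU := add_conj_mul_star_dotProduct_cm_mulVec_nonneg ha hMU (u t)
    have hV := add_conj_mul_star_dotProduct_cm_mulVec_nonneg hb hMV (v t)
    linear_combination hU + hV
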